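/- No nonidentity rotation of the 3×3 board fixes any second-phase Picaria configuration: for each of the three rotations by 90, 180 and 270 degrees, there is no configuration in S fixed by that rotation. -/

import Mathlib

/-- The two players of Picaria. -/
inductive Player : Type
  | X : Player
  | O : Player
deriving DecidableEq

instance : Fintype Player :=
  ⟨{Player.X, Player.O}, by intro x; cases x <;> simp⟩

/-- The opponent of a player. -/
def Player.other : Player → Player
  | Player.X => Player.O
  | Player.O => Player.X

/-- A cell of the 3×3 board, written (row, column), 0-indexed. -/
abbrev Cell : Type := Fin 3 × Fin 3

/-- A configuration assigns to each cell an optional stone. -/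
abbrev Config : Type := Cell → Option Player

/-- King-move adjacency on the board: distinct cells whose coordinates
differ by at most 1 each. -/
def adjacent (a b : Cell) : Prop :=
  a ≠ b ∧ |((a.1 : ℕ) : ℤ) - ((b.1 : ℕ) : ℤ)| ≤ 1 ∧
    |((a.2 : ℕ) : ℤ) - ((b.2 : ℕ) : ℤ)| ≤ 1

/-- The 8 lines of the board: 3 rows, 3 columns, 2 main diagonals. -/
def lines : List (Cell × Cell × Cell) :=
  [((0,0),(0,1),(0,2)), ((1,0),(1,1),(1,2)), ((2,0),(2,1),(2,2)),
   ((0,0),(1,0),(2,0)), ((0,1),(1,1),(2,1)), ((0,2),(1,2),(2,2)),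
   ((0,0),(1,1),(2,2)), ((0,2),(1,1),(2,0))]

/-- Player `p` has three-in-a-row in configuration `c`. -/
def threeInARow (c : Config) (p : Player) : Prop :=
  ∃ l ∈ lines, c l.1 = some p ∧ c l.2.1 = some p ∧ c l.2.2 = some p

/-- The number of stones of player `p` on the board. -/
def stoneCount (c : Config) (p : Player) : ℕ :=
  (Finset.univ.filter fun x : Cell => c x = some p).card

/-- Legal moves of player `t` from configuration `c`, producing `c'`:
placement on an empty cell while `t` has fewer than 3 stones on the board;
otherwise a slide of one of `t`'s stones to an adjacent empty cell. -/
def Move (t : Player) (c c' : Config) : Prop :=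
  (stoneCount c t < 3 ∧ ∃ x : Cell, c x = none ∧ c' = Function.update c x (some t)) ∨
  (3 ≤ stoneCount c t ∧ ∃ x y : Cell, c x = some t ∧ c y = none ∧ adjacent x y ∧
    c' = Function.update (Function.update c x none) y (some t))

/-- `WinningFor p` is the least set of states (configuration, player to move) such that:
(i) `(c, p)` is winning for `p` if some legal move of `p` immediately makes a
three-in-a-row for `p`, or leads to a state winning for `p`;
(ii) `(c, q)` (for `q` the opponent of `p`) is winning for `p` if `q` has at least one
legal move, and every legal move of `q` yields a configuration with no three-in-a-row
for `q` together with a state winning for `p`. -/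
inductive WinningFor (p : Player) : Config × Player → Prop
  | moveWin (c c' : Config) (h : Move p c c') (hw : threeInARow c' p) :
      WinningFor p (c, p)
  | moveStep (c c' : Config) (h : Move p c c') (hw : WinningFor p (c', p.other)) :
      WinningFor p (c, p)
  | forced (c : Config) (hne : ∃ c', Move p.other c c')
      (hnowin : ∀ c', Move p.other c c' → ¬ threeInARow c' p.other)
      (hall : ∀ c', Move p.other c c' → WinningFor p (c', p)) :
      WinningFor p (c, p.other)

/-- The quarter-turn rotation of the 3×3 board: (i, j) ↦ (j, 2 − i). -/
def rot : Equiv.Perm Cell where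
  toFun x := (x.2, 2 - x.1)
  invFun x := (2 - x.2, x.1)
  left_inv := by intro x; fin_cases x <;> rfl
  right_inv := by intro x; fin_cases x <;> rfl

/-- The reflection of the 3×3 board: (i, j) ↦ (i, 2 − j). -/
def reflB : Equiv.Perm Cell where
  toFun x := (x.1, 2 - x.2)
  invFun x := (x.1, 2 - x.2)
  left_inv := by intro x; fin_cases x <;> rfl
  right_inv := by intro x; fin_cases x <;> rfl

/-- The dihedral group of order 8, acting on the board as its symmetries. -/
def D4 : Subgroup (Equiv.Perm Cell) := Subgroup.closure {rot, reflB}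

/-- The action of a board symmetry on configurations: (g · c)(x) = c(g⁻¹ x). -/
def smulConfig (g : Equiv.Perm Cell) (c : Config) : Config := fun x => c (g⁻¹ x)

/-- Second-phase configurations: exactly three X stones and three O stones. -/
def S : Set Config := {c | stoneCount c Player.X = 3 ∧ stoneCount c Player.O = 3}

lemma bnd (v : Option Player) :
    (if v = some Player.X then 1 else 0) + (if v = some Player.O then 1 else 0) ≤ 1 := by
  rcases v with _ | p
  · simp
  · rcases p <;> simp

lemma sc_expand (c : Config) (p : Player) : stoneCount c p =
    (if c (0,0) = some p then 1 else 0) + (if c (0,1) = some p then 1 else 0) +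
    (if c (0,2) = some p then 1 else 0) + (if c (1,0) = some p then 1 else 0) +
    (if c (1,1) = some p then 1 else 0) + (if c (1,2) = some p then 1 else 0) +
    (if c (2,0) = some p then 1 else 0) + (if c (2,1) = some p then 1 else 0) +
    (if c (2,2) = some p then 1 else 0) := by
  rw [stoneCount, Finset.card_filter, Fintype.sum_prod_type,
    Fin.sum_univ_three, Fin.sum_univ_three, Fin.sum_univ_three, Fin.sum_univ_three]
  ring

/-- No nonidentity rotation of the board fixes any second-phase Picaria configuration. -/
theorem picaria_rotations_fix_nothing :
    ∀ k ∈ ({1, 2, 3} : Finset ℕ), ∀ c ∈ S, smulConfig (rot ^ k) c ≠ c := by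
  intro k hk c hc heq
  obtain ⟨hX, hO⟩ := hc
  rw [sc_expand] at hX hO
  have hh : ∀ x : Cell, c ((rot ^ k)⁻¹ x) = c x := fun x => congrFun heq x
  fin_cases hk
  · -- k = 1
    have e1 : c (2,0) = c (0,0) := hh (0,0)
    have e2 : c (0,2) = c (0,0) := (hh (0,2)).symm
    have e3 : c (2,2) = c (0,0) := (hh (2,2)).symm.trans e2
    have e4 : c (1,0) = c (0,1) := hh (0,1)
    have e5 : c (1,2) = c (0,1) := (hh (1,2)).symm
    have e6 : c (2,1) = c (0,1) := (hh (1,0)).trans e4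
    rw [e1, e2, e3, e4, e5, e6] at hX hO
    have b1 := bnd (c (1,1))
    omega
  · -- k = 2
    have e1 : c (2,2) = c (0,0) := hh (0,0)
    have e2 : c (2,1) = c (0,1) := hh (0,1)
    have e3 : c (2,0) = c (0,2) := hh (0,2)
    have e4 : c (1,2) = c (1,0) := hh (1,0)
    rw [e1, e2, e3, e4] at hX hO
    have b1 := bnd (c (1,1))
    omega
  · -- k = 3
    have e1 : c (0,2) = c (0,0) := hh (0,0)
    have e2 : c (2,2) = c (0,0) := (hh (0,2)).trans e1
    have e3 : c (2,0) = c (0,0) := (hh (2,2)).trans e2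
    have e4 : c (1,2) = c (0,1) := hh (0,1)
    have e5 : c (2,1) = c (0,1) := (hh (1,2)).trans e4
    have e6 : c (1,0) = c (0,1) := (hh (1,0)).symm
    rw [e1, e2, e3, e4, e5, e6] at hX hO
    have b1 := bnd (c (1,1))
    omega
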